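/- arXiv:1905.02149 — 5 statements merged into one kernel-verified Lean document; each statement's English description precedes it below -/
import Mathlib

section
/- Let a₁,…,aₙ be reals and Δ ≥ 0, and let b be the lower convex hull of the points (i, aᵢ + Δ) evaluated at integer points. Then there exists a convex vector c with max_i |cᵢ - aᵢ| ≤ Δ if and only if bᵢ ≥ aᵢ - Δ for all i; in that case b itself is such a vector. -/
/-- A vector (indexed `0,…,n-1`) is convex if its second-order differences are
nonnegative. -/
def ConvexVec (n : ℕ) (b : ℕ → ℝ) : Prop :=
  ∀ i : ℕ, 1 ≤ i → i + 1 < n → b i - b (i - 1) ≤ b (i + 1) - b i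

theorem stmt_11_general (n : ℕ) (a b : ℕ → ℝ) (Δ : ℝ)
    (hb1 : ConvexVec n b) (hb2 : ∀ i < n, b i ≤ a i + Δ)
    (hb3 : ∀ c : ℕ → ℝ, ConvexVec n c → (∀ i < n, c i ≤ a i + Δ) →
      ∀ i < n, c i ≤ b i) :
    ((∃ c : ℕ → ℝ, ConvexVec n c ∧ ∀ i < n, |c i - a i| ≤ Δ) ↔
      ∀ i < n, a i - Δ ≤ b i) ∧
    ((∀ i < n, a i - Δ ≤ b i) → ∀ i < n, |b i - a i| ≤ Δ) := by
  have hb_close : (∀ i < n, a i - Δ ≤ b i) → ∀ i < n, |b i - a i| ≤ Δ := fun h i hi =>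
    abs_sub_le_iff.2 ⟨by linarith [hb2 i hi], by linarith [h i hi]⟩
  refine ⟨⟨?_, fun h => ⟨b, hb1, hb_close h⟩⟩, hb_close⟩
  rintro ⟨c, hc, hca⟩ i hi
  have hc_le_b : c i ≤ b i :=
    hb3 c hc (fun j hj => by linarith [(abs_sub_le_iff.1 (hca j hj)).1]) i hi
  linarith [(abs_sub_le_iff.1 (hca i hi)).2]

theorem stmt_11 (n : ℕ) (a b : ℕ → ℝ) (Δ : ℝ) (hΔ : 0 ≤ Δ)
    (hb1 : ConvexVec n b) (hb2 : ∀ i < n, b i ≤ a i + Δ)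
    (hb3 : ∀ c : ℕ → ℝ, ConvexVec n c → (∀ i < n, c i ≤ a i + Δ) →
      ∀ i < n, c i ≤ b i) :
    ((∃ c : ℕ → ℝ, ConvexVec n c ∧ ∀ i < n, |c i - a i| ≤ Δ) ↔
      ∀ i < n, a i - Δ ≤ b i) ∧
    ((∀ i < n, a i - Δ ≤ b i) → ∀ i < n, |b i - a i| ≤ Δ) :=
  stmt_11_general n a b Δ hb1 hb2 hb3
end

section
/- Let 1 ≤ j < i < k ≤ n and a ∈ R^n, Δ ≥ 0. If any convex vector c satisfies |cₘ - aₘ| ≤ Δ for m ∈ {j, i, k}, then Δ ≥ (1/2)·( aᵢ - aⱼ - ((i-j)/(k-j))·(aₖ - aⱼ) ). -/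
lemma diff_mono (n : ℕ) (c : ℕ → ℝ) (hc : ConvexVec n c) :
    ∀ p q : ℕ, p ≤ q → q + 1 < n → c (p + 1) - c p ≤ c (q + 1) - c q := by
  intro p q hpq
  induction q, hpq using Nat.le_induction with
  | base => intro _; exact le_refl _
  | succ q hpq ih =>
    intro hq
    have h1 : c (q + 1) - c q ≤ c (q + 2) - c (q + 1) := by
      have := hc (q + 1) (by omega) (by omega)
      simpa using this
    have h2 := ih (by omega)
    calc c (p + 1) - c p ≤ c (q + 1) - c q := h2
      _ ≤ c (q + 1 + 1) - c (q + 1) := by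
        have : q + 1 + 1 = q + 2 := by ring
        rw [this]; exact h1

lemma lower_bound (n : ℕ) (c : ℕ → ℝ) (hc : ConvexVec n c) :
    ∀ p q : ℕ, p < q → q < n → ((q : ℝ) - p) * (c (p + 1) - c p) ≤ c q - c p := by
  intro p q hpq
  induction q, hpq using Nat.le_induction with
  | base =>
    intro _
    push_cast
    have : ((p : ℝ) + 1 - p) = 1 := by ring
    rw [this, one_mul]
  | succ q hpq ih =>
    intro hq
    have hdm : c (p + 1) - c p ≤ c (q + 1) - c q :=
      diff_mono n c hc p q (by omega) (by omega)
    have h2 := ih (by omega)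
    push_cast
    push_cast at h2
    nlinarith [hdm, h2]

lemma upper_bound (n : ℕ) (c : ℕ → ℝ) (hc : ConvexVec n c) :
    ∀ p q : ℕ, p < q → q + 1 < n → c q - c p ≤ ((q : ℝ) - p) * (c (q + 1) - c q) := by
  intro p q hpq
  induction q, hpq using Nat.le_induction with
  | base =>
    intro hq
    have h1 : c (p + 1) - c p ≤ c (p + 2) - c (p + 1) := by
      have := hc (p + 1) (by omega) (by omega)
      simpa using this
    push_cast
    have e : ((p : ℝ) + 1 - p) = 1 := by ring
    rw [e, one_mul]
    have : p + 1 + 1 = p + 2 := by ring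
    rw [this]; exact h1
  | succ q hpq ih =>
    intro hq
    have h2 := ih (by omega)
    have hdm : c (q + 1) - c q ≤ c (q + 1 + 1) - c (q + 1) :=
      diff_mono n c hc q (q + 1) (by omega) (by omega)
    have hqp : (0 : ℝ) ≤ (q : ℝ) - p := by
      have : (p : ℝ) ≤ q := by exact_mod_cast Nat.le_of_succ_le hpq
      linarith
    push_cast
    push_cast at h2
    nlinarith [h2, hdm, hqp]

theorem stmt_12 (n j i k : ℕ) (hji : j < i) (hik : i < k) (hkn : k < n)
    (a c : ℕ → ℝ) (Δ : ℝ)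
    (hc : ConvexVec n c)
    (hj : |c j - a j| ≤ Δ) (hi : |c i - a i| ≤ Δ) (hk : |c k - a k| ≤ Δ) :
    (1 / 2) * (a i - a j - (((i : ℝ) - (j : ℝ)) / ((k : ℝ) - (j : ℝ))) * (a k - a j))
      ≤ Δ := by
  have hub : c i - c j ≤ ((i : ℝ) - j) * (c (i + 1) - c i) :=
    upper_bound n c hc j i hji (by omega)
  have hlb : ((k : ℝ) - i) * (c (i + 1) - c i) ≤ c k - c i :=
    lower_bound n c hc i k hik hkn
  have hij : (0 : ℝ) < (i : ℝ) - j := by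
    have : (j : ℝ) < i := by exact_mod_cast hji
    linarith
  have hki : (0 : ℝ) < (k : ℝ) - i := by
    have : (i : ℝ) < k := by exact_mod_cast hik
    linarith
  have hkj : (0 : ℝ) < (k : ℝ) - j := by linarith
  -- key: (k - j)(c i - c j) ≤ (i - j)(c k - c j)
  have key : ((k : ℝ) - j) * (c i - c j) ≤ ((i : ℝ) - j) * (c k - c j) := by
    nlinarith [hub, hlb, hij.le, hki.le]
  set lam : ℝ := ((i : ℝ) - j) / ((k : ℝ) - j) with hlam
  have hlam0 : 0 ≤ lam := by positivity
  have hlam1 : lam ≤ 1 := by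
    rw [hlam, div_le_one hkj]; linarith
  have hkey2 : c i - c j ≤ lam * (c k - c j) := by
    rw [hlam, div_mul_eq_mul_div, le_div_iff₀ hkj]
    nlinarith [key]
  rw [abs_le] at hj hi hk
  nlinarith [hkey2, hj.1, hj.2, hi.1, hi.2, hk.1, hk.2, hlam0, hlam1,
    mul_le_mul_of_nonneg_left hk.1 hlam0, mul_le_mul_of_nonneg_left hk.2 hlam0,
    mul_le_mul_of_nonneg_left hj.1 (by linarith : (0:ℝ) ≤ 1 - lam),
    mul_le_mul_of_nonneg_left hj.2 (by linarith : (0:ℝ) ≤ 1 - lam)]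
end

section
/- With the truncated solution sets S_{i-1}, S_i and feasibility polygons P_{i-1}, P_i as defined (P_k = {(b_k, b_k - b_{k-1}) : b ∈ S_k}), and with only the second-order constraint at index i active (no value or first-order constraint at i), the resulting feasibility set equals { (x + α_i y + w, α_i y + w) : (x,y) ∈ P_{i-1}, w ∈ [z_i^-, z_i^+] }. -/
/-! With only a second-order constraint at index `k`, the new entry is
`b_k = b_{k-1} + α_k (b_{k-1} - b_{k-2}) + w` with `w ∈ [z_k^-, z_k^+]`, and `w` is free:
`S_k` only constrains the entries below `k`, so any such `b_k` can be written into any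
`b ∈ S_k`. -/

/-- The truncated solution set `S_k`: vectors (0-indexed) satisfying the value,
first-order and second-order difference constraints on the first `k` entries. -/
def solSet (xm xp ym yp zm zp al : ℕ → ℝ) (k : ℕ) : Set (ℕ → ℝ) :=
  {b | (∀ j, j < k → xm j ≤ b j ∧ b j ≤ xp j) ∧
       (∀ j, 1 ≤ j → j < k → ym j ≤ b j - b (j - 1) ∧ b j - b (j - 1) ≤ yp j) ∧
       (∀ j, 2 ≤ j → j < k →
          zm j ≤ (b j - b (j - 1)) - al j * (b (j - 1) - b (j - 2)) ∧
          (b j - b (j - 1)) - al j * (b (j - 1) - b (j - 2)) ≤ zp j)}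

/-- The feasibility polygon `P_k = {(b_{k-1}, b_{k-1} - b_{k-2}) : b ∈ S_k}`. -/
def feasSet (xm xp ym yp zm zp al : ℕ → ℝ) (k : ℕ) : Set (ℝ × ℝ) :=
  {p | ∃ b ∈ solSet xm xp ym yp zm zp al k, p = (b (k - 1), b (k - 1) - b (k - 2))}

section

variable {xm xp ym yp zm zp al : ℕ → ℝ} {k : ℕ}

theorem mem_solSet_of_eqOn {b b' : ℕ → ℝ} (hb : b ∈ solSet xm xp ym yp zm zp al k)
    (hbb' : ∀ j < k, b j = b' j) : b' ∈ solSet xm xp ym yp zm zp al k := by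
  obtain ⟨hval, hfirst, hsecond⟩ := hb
  refine ⟨fun j hj => ?_, fun j hj1 hj => ?_, fun j hj2 hj => ?_⟩
  · rw [← hbb' j hj]
    exact hval j hj
  · rw [← hbb' j hj, ← hbb' (j - 1) (by omega)]
    exact hfirst j hj1 hj
  · rw [← hbb' j hj, ← hbb' (j - 1) (by omega), ← hbb' (j - 2) (by omega)]
    exact hsecond j hj2 hj

theorem update_mem_solSet {b : ℕ → ℝ} (hb : b ∈ solSet xm xp ym yp zm zp al k) (v : ℝ) :
    Function.update b k v ∈ solSet xm xp ym yp zm zp al k :=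
  mem_solSet_of_eqOn hb fun _ hj => (Function.update_of_ne hj.ne v b).symm

theorem secondOrderStep_eq_image (hk : 1 ≤ k) :
    {p : ℝ × ℝ | ∃ b ∈ solSet xm xp ym yp zm zp al k,
        (zm k ≤ (b k - b (k - 1)) - al k * (b (k - 1) - b (k - 2)) ∧
         (b k - b (k - 1)) - al k * (b (k - 1) - b (k - 2)) ≤ zp k) ∧
        p = (b k, b k - b (k - 1))}
      = {p : ℝ × ℝ | ∃ q ∈ feasSet xm xp ym yp zm zp al k, ∃ w : ℝ,
          zm k ≤ w ∧ w ≤ zp k ∧ p = (q.1 + al k * q.2 + w, al k * q.2 + w)} := by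
  ext p
  constructor
  · rintro ⟨b, hb, ⟨hw_lo, hw_hi⟩, rfl⟩
    refine ⟨_, ⟨b, hb, rfl⟩, _, hw_lo, hw_hi, ?_⟩
    ext <;> ring
  · rintro ⟨q, ⟨b, hb, rfl⟩, w, hw_lo, hw_hi, rfl⟩
    set b' := Function.update b k (b (k - 1) + al k * (b (k - 1) - b (k - 2)) + w)
    have hb'_k : b' k = b (k - 1) + al k * (b (k - 1) - b (k - 2)) + w :=
      Function.update_self ..
    have hb'_eq : ∀ j < k, b' j = b j := fun j hj => Function.update_of_ne hj.ne _ _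
    have hw : (b' k - b' (k - 1)) - al k * (b' (k - 1) - b' (k - 2)) = w := by
      rw [hb'_k, hb'_eq _ (by omega), hb'_eq _ (by omega)]
      ring
    refine ⟨b', update_mem_solSet hb _, ⟨hw ▸ hw_lo, hw ▸ hw_hi⟩, ?_⟩
    rw [hb'_k, hb'_eq _ (by omega)]
    ext <;> ring

end

theorem stmt_14_general (xm xp ym yp zm zp al : ℕ → ℝ)
    (i : ℕ) (hi : 3 ≤ i) :
    {p : ℝ × ℝ | ∃ b ∈ solSet xm xp ym yp zm zp al (i - 1),
        (zm (i - 1) ≤ (b (i - 1) - b (i - 2)) - al (i - 1) * (b (i - 2) - b (i - 3)) ∧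
         (b (i - 1) - b (i - 2)) - al (i - 1) * (b (i - 2) - b (i - 3)) ≤ zp (i - 1)) ∧
        p = (b (i - 1), b (i - 1) - b (i - 2))}
      = {p : ℝ × ℝ | ∃ q ∈ feasSet xm xp ym yp zm zp al (i - 1), ∃ w : ℝ,
          zm (i - 1) ≤ w ∧ w ≤ zp (i - 1) ∧
          p = (q.1 + al (i - 1) * q.2 + w, al (i - 1) * q.2 + w)} := by
  simpa only [Nat.sub_sub] using secondOrderStep_eq_image (k := i - 1) (by omega)

theorem stmt_14 (xm xp ym yp zm zp al : ℕ → ℝ)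
    (hx : ∀ j, xm j ≤ xp j) (hy : ∀ j, ym j ≤ yp j) (hz : ∀ j, zm j ≤ zp j)
    (hal : ∀ j, 0 < al j) (i : ℕ) (hi : 3 ≤ i) :
    {p : ℝ × ℝ | ∃ b ∈ solSet xm xp ym yp zm zp al (i - 1),
        (zm (i - 1) ≤ (b (i - 1) - b (i - 2)) - al (i - 1) * (b (i - 2) - b (i - 3)) ∧
         (b (i - 1) - b (i - 2)) - al (i - 1) * (b (i - 2) - b (i - 3)) ≤ zp (i - 1)) ∧
        p = (b (i - 1), b (i - 1) - b (i - 2))}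
      = {p : ℝ × ℝ | ∃ q ∈ feasSet xm xp ym yp zm zp al (i - 1), ∃ w : ℝ,
          zm (i - 1) ≤ w ∧ w ≤ zp (i - 1) ∧
          p = (q.1 + al (i - 1) * q.2 + w, al (i - 1) * q.2 + w)} :=
  stmt_14_general xm xp ym yp zm zp al i hi
end

section
/- Full feasibility polygon recurrence: with P_k = {(b_k, b_k - b_{k-1}) : b ∈ S_k}, we have P_i = { (x', y') : ∃ (x,y) ∈ P_{i-1}, ∃ w ∈ [z_i^-, z_i^+], x' = x + α_i y + w, y' = α_i y + w, x_i^- ≤ x' ≤ x_i^+, y_i^- ≤ y' ≤ y_i^+ }. -/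
theorem stmt_15 (xm xp ym yp zm zp al : ℕ → ℝ)
    (hx : ∀ j, xm j ≤ xp j) (hy : ∀ j, ym j ≤ yp j) (hz : ∀ j, zm j ≤ zp j)
    (hal : ∀ j, 0 < al j) (i : ℕ) (hi : 3 ≤ i) :
    feasSet xm xp ym yp zm zp al i
      = {p : ℝ × ℝ | ∃ q ∈ feasSet xm xp ym yp zm zp al (i - 1), ∃ w : ℝ,
          zm (i - 1) ≤ w ∧ w ≤ zp (i - 1) ∧
          p.1 = q.1 + al (i - 1) * q.2 + w ∧ p.2 = al (i - 1) * q.2 + w ∧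
          xm (i - 1) ≤ p.1 ∧ p.1 ≤ xp (i - 1) ∧
          ym (i - 1) ≤ p.2 ∧ p.2 ≤ yp (i - 1)} := by
  have e1 : i - 1 - 1 = i - 2 := by omega
  have e2 : i - 1 - 2 = i - 3 := by omega
  have h1i : 1 ≤ i - 1 := by omega
  have h2i : 2 ≤ i - 1 := by omega
  have hlt : i - 1 < i := by omega
  ext p
  constructor
  · rintro ⟨b, ⟨hb1, hb2, hb3⟩, rfl⟩
    refine ⟨(b (i - 2), b (i - 2) - b (i - 3)),
      ⟨b, ⟨fun j hj => hb1 j (by omega),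
           fun j hj1 hj2 => hb2 j hj1 (by omega),
           fun j hj1 hj2 => hb3 j hj1 (by omega)⟩, by rw [e1, e2]⟩,
      (b (i - 1) - b (i - 2)) - al (i - 1) * (b (i - 2) - b (i - 3)), ?_, ?_, ?_, ?_, ?_, ?_, ?_, ?_⟩
    · have := hb3 (i - 1) h2i hlt
      rw [e1, e2] at this; exact this.1
    · have := hb3 (i - 1) h2i hlt
      rw [e1, e2] at this; exact this.2
    · ring
    · ring
    · exact (hb1 (i - 1) hlt).1
    · exact (hb1 (i - 1) hlt).2
    · have := hb2 (i - 1) h1i hlt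
      rw [e1] at this; exact this.1
    · have := hb2 (i - 1) h1i hlt
      rw [e1] at this; exact this.2
  · rintro ⟨q, ⟨b, ⟨hb1, hb2, hb3⟩, hq⟩, w, hw1, hw2, hp1, hp2, hx1, hx2, hy1, hy2⟩
    rw [e1, e2] at hq
    have hq1 : q.1 = b (i - 2) := by rw [hq]
    have hq2 : q.2 = b (i - 2) - b (i - 3) := by rw [hq]
    set b' : ℕ → ℝ := Function.update b (i - 1) p.1 with hb'
    have hne : ∀ j, j ≠ i - 1 → b' j = b j := fun j hj => Function.update_of_ne hj _ _
    have heq : b' (i - 1) = p.1 := Function.update_self _ _ _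
    have hbi2 : b' (i - 2) = b (i - 2) := hne _ (by omega)
    have hbi3 : b' (i - 3) = b (i - 3) := hne _ (by omega)
    refine ⟨b', ⟨?_, ?_, ?_⟩, ?_⟩
    · intro j hj
      rcases eq_or_lt_of_le (Nat.le_of_lt_succ (by omega : j < (i - 1) + 1)) with h | h
      · rw [h, heq]; exact ⟨hx1, hx2⟩
      · rw [hne j (by omega)]; exact hb1 j (by omega)
    · intro j hj1 hj2
      rcases eq_or_lt_of_le (Nat.le_of_lt_succ (by omega : j < (i - 1) + 1)) with h | h
      · subst h
        rw [heq, e1, hbi2]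
        have : p.1 - b (i - 2) = p.2 := by rw [hp1, hp2, hq1]; ring
        rw [this]; exact ⟨hy1, hy2⟩
      · rw [hne j (by omega), hne (j - 1) (by omega)]; exact hb2 j hj1 (by omega)
    · intro j hj1 hj2
      rcases eq_or_lt_of_le (Nat.le_of_lt_succ (by omega : j < (i - 1) + 1)) with h | h
      · subst h
        rw [heq, e1, e2, hbi2, hbi3]
        have : p.1 - b (i - 2) - al (i - 1) * (b (i - 2) - b (i - 3)) = w := by
          rw [hp1, hq1, hq2]; ring
        rw [this]; exact ⟨hw1, hw2⟩
      · rw [hne j (by omega), hne (j - 1) (by omega), hne (j - 2) (by omega)]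
        exact hb3 j hj1 (by omega)
    · have hp2' : p.2 = p.1 - b (i - 2) := by rw [hp1, hp2, hq1]; ring
      rw [heq, hbi2, ← hp2']
end

section
/- Backtracing step correctness: suppose (u, v) ∈ P_i (so u = b_i, v = b_i - b_{i-1} for some feasible prefix). Let x' = u - v. Then there exists y ∈ R with (x', y) ∈ P_{i-1} and z_i^- ≤ v - α_i y ≤ z_i^+; moreover, if y_max = sup{ y : (x', y) ∈ P_{i-1} } is attained, then either v - α_i y_max ∈ [z_i^-, z_i^+] (take y = y_max), or y = (v - z_i^-)/α_i satisfies (x', y) ∈ P_{i-1} and v - α_i y = z_i^-. -/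
/-! The feasible prefix `b` behind `(u, v) ∈ P_i` is itself a witness: its slope
`y = b_{i-2} - b_{i-3}` puts `(u - v, y)` in `P_{i-1}` and satisfies the second-order
constraint at `i - 1`. Raising `y` towards `y_max` only decreases `v - α y`, so `y_max`
can violate the constraint only from below; the root of `v - α y = z⁻` then lies between
the witness slope and `y_max`, hence in the order-connected section. -/

theorem solSet_antitone (xm xp ym yp zm zp al : ℕ → ℝ) :
    Antitone (solSet xm xp ym yp zm zp al) :=
  fun _ _ hkl _ ⟨hval, hfirst, hsecond⟩ =>
    ⟨fun j hj => hval j (by omega), fun j h1 hj => hfirst j h1 (by omega),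
      fun j h2 hj => hsecond j h2 (by omega)⟩

theorem exists_mem_feasSet_pred {xm xp ym yp zm zp al : ℕ → ℝ} {i : ℕ} (hi : 3 ≤ i)
    {u v : ℝ} (huv : (u, v) ∈ feasSet xm xp ym yp zm zp al i) :
    ∃ y : ℝ, (u - v, y) ∈ feasSet xm xp ym yp zm zp al (i - 1) ∧
      zm (i - 1) ≤ v - al (i - 1) * y ∧ v - al (i - 1) * y ≤ zp (i - 1) := by
  obtain ⟨b, hb, hbuv⟩ := huv
  obtain ⟨rfl, rfl⟩ := Prod.ext_iff.mp hbuv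
  have hi₁ : i - 1 - 1 = i - 2 := by omega
  have hi₂ : i - 1 - 2 = i - 3 := by omega
  refine ⟨b (i - 2) - b (i - 3), ⟨b, solSet_antitone _ _ _ _ _ _ _ (by omega) hb, ?_⟩, ?_⟩
  · rw [hi₁, hi₂, sub_sub_cancel]
  · simpa only [hi₁, hi₂] using hb.2.2 (i - 1) (by omega) (by omega)

theorem Set.OrdConnected.sub_mul_mem_Icc_at_greatest_or_root_mem {s : Set ℝ}
    (hs : s.OrdConnected) {a v zl zu y₀ ymax : ℝ} (ha : 0 < a) (hy₀ : y₀ ∈ s)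
    (hmax : IsGreatest s ymax) (hy₀z : v - a * y₀ ∈ Icc zl zu) :
    v - a * ymax ∈ Icc zl zu ∨
      ((v - zl) / a ∈ s ∧ v - a * ((v - zl) / a) = zl) := by
  have hy₀max : a * y₀ ≤ a * ymax := mul_le_mul_of_nonneg_left (hmax.2 hy₀) ha.le
  by_cases hc : zl ≤ v - a * ymax
  · exact Or.inl ⟨hc, by linarith [hy₀z.2]⟩
  · refine Or.inr ⟨hs.out hy₀ hmax.1 ⟨?_, ?_⟩, by field_simp; ring⟩
    · rw [le_div_iff₀ ha]; linarith [hy₀z.1]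
    · rw [div_le_iff₀ ha]; linarith

theorem stmt_16_general (xm xp ym yp zm zp al : ℕ → ℝ)
    (hal : ∀ j, 0 < al j) (i : ℕ) (hi : 3 ≤ i) (u v : ℝ)
    (huv : (u, v) ∈ feasSet xm xp ym yp zm zp al i) :
    (∃ y : ℝ, (u - v, y) ∈ feasSet xm xp ym yp zm zp al (i - 1) ∧
        zm (i - 1) ≤ v - al (i - 1) * y ∧ v - al (i - 1) * y ≤ zp (i - 1)) ∧
    (∀ ymax : ℝ,
      IsGreatest {y : ℝ | (u - v, y) ∈ feasSet xm xp ym yp zm zp al (i - 1)} ymax →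
      ({y : ℝ | (u - v, y) ∈ feasSet xm xp ym yp zm zp al (i - 1)}).OrdConnected →
      ((zm (i - 1) ≤ v - al (i - 1) * ymax ∧ v - al (i - 1) * ymax ≤ zp (i - 1)) ∨
       ((u - v, (v - zm (i - 1)) / al (i - 1)) ∈ feasSet xm xp ym yp zm zp al (i - 1) ∧
        v - al (i - 1) * ((v - zm (i - 1)) / al (i - 1)) = zm (i - 1)))) := by
  obtain ⟨y₀, hy₀, hl, hu⟩ := exists_mem_feasSet_pred hi huv
  exact ⟨⟨y₀, hy₀, hl, hu⟩, fun _ hmax hs =>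
    hs.sub_mul_mem_Icc_at_greatest_or_root_mem (hal _) hy₀ hmax ⟨hl, hu⟩⟩

theorem stmt_16 (xm xp ym yp zm zp al : ℕ → ℝ)
    (hx : ∀ j, xm j ≤ xp j) (hy : ∀ j, ym j ≤ yp j) (hz : ∀ j, zm j ≤ zp j)
    (hal : ∀ j, 0 < al j) (i : ℕ) (hi : 3 ≤ i) (u v : ℝ)
    (huv : (u, v) ∈ feasSet xm xp ym yp zm zp al i) :
    (∃ y : ℝ, (u - v, y) ∈ feasSet xm xp ym yp zm zp al (i - 1) ∧
        zm (i - 1) ≤ v - al (i - 1) * y ∧ v - al (i - 1) * y ≤ zp (i - 1)) ∧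
    (∀ ymax : ℝ,
      IsGreatest {y : ℝ | (u - v, y) ∈ feasSet xm xp ym yp zm zp al (i - 1)} ymax →
      ({y : ℝ | (u - v, y) ∈ feasSet xm xp ym yp zm zp al (i - 1)}).OrdConnected →
      ((zm (i - 1) ≤ v - al (i - 1) * ymax ∧ v - al (i - 1) * ymax ≤ zp (i - 1)) ∨
       ((u - v, (v - zm (i - 1)) / al (i - 1)) ∈ feasSet xm xp ym yp zm zp al (i - 1) ∧
        v - al (i - 1) * ((v - zm (i - 1)) / al (i - 1)) = zm (i - 1)))) :=
  stmt_16_general xm xp ym yp zm zp al hal i hi u v huv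
end
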